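/- For any strategy σ_∃, the assumption EA⁻(σ_∃) = (L ∪ ((Σ_I·Σ_O)^ω \ Out(σ_∃))) \ Doomed(σ_∃) is sufficient for σ_∃ and is not output-restrictive; moreover every assumption A that is sufficient for σ_∃ and not output-restrictive satisfies A ⊆ EA⁻(σ_∃). -/
import Mathlib


open scoped Classical

universe u v

variable {I : Type u} {O : Type v}

/-- The finite (even) history consisting of the first `n` (input, output) pairs of a word.
A word in `(Σ_I · Σ_O)^ω` is modelled as `w : ℕ → I × O`, where round `n` consists of the
input letter `(w n).1` followed by the output letter `(w n).2`. -/
def wpref (w : ℕ → I × O) (n : ℕ) : List (I × O) := (List.range n).map w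

/-- Outcomes of a controller strategy `σ : (Σ_I·Σ_O)^*·Σ_I → Σ_O`. -/
def OutC (σ : List (I × O) → I → O) : Set (ℕ → I × O) :=
  {w | ∀ n, (w n).2 = σ (wpref w n) (w n).1}

/-- Outcomes of an environment strategy `τ : (Σ_I·Σ_O)^* → Σ_I`. -/
def OutE (τ : List (I × O) → I) : Set (ℕ → I × O) :=
  {w | ∀ n, (w n).1 = τ (wpref w n)}

/-- Input projection `π_I`. -/
def inputProj (w : ℕ → I × O) : ℕ → I := fun n => (w n).1

/-- `A` is an input assumption: closed under changing output letters. -/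
def IsInputAssumption (A : Set (ℕ → I × O)) : Prop :=
  ∀ w w' : ℕ → I × O, inputProj w = inputProj w' → w ∈ A → w' ∈ A

/-- Cylinder `h·(Σ_I·Σ_O)^ω` of an even history `h`. -/
def cylE (h : List (I × O)) : Set (ℕ → I × O) := {w | wpref w h.length = h}

/-- Cylinder of a general history: an even part plus possibly a pending input letter. -/
def cylH (h : List (I × O) × Option I) : Set (ℕ → I × O) :=
  {w | wpref w h.1.length = h.1 ∧ ∀ i, h.2 = some i → (w h.1.length).1 = i}

/-- A scenario is coherent: no history is a prefix of two words of `S`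
that agree on the next input but disagree on the next output. -/
def Coherent (S : Set (ℕ → I × O)) : Prop :=
  ∀ w ∈ S, ∀ w' ∈ S, ∀ n, wpref w n = wpref w' n → (w n).1 = (w' n).1 → (w n).2 = (w' n).2

/-- The strategy `[S → σ]`: follow a word of the scenario `S` extending the current
history if one exists, and otherwise play `σ`. -/
noncomputable def shiftStrat (S : Set (ℕ → I × O))
    (σ : List (I × O) → I → O) : List (I × O) → I → O := fun h i =>
  if hex : ∃ w, w ∈ S ∧ wpref w h.length = h ∧ (w h.length).1 = i
  then (hex.choose h.length).2
  else σ h i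

/-- `EA(σ) = L ∪ ((Σ_I·Σ_O)^ω \ Out(σ))`. -/
def EA (L : Set (ℕ → I × O)) (σ : List (I × O) → I → O) : Set (ℕ → I × O) :=
  L ∪ (OutC σ)ᶜ

/-- The words doomed for `σ`: some even-length prefix extends to an outcome of `σ`,
but no outcome of `σ` extending that prefix is in `L`. -/
def Doomed (L : Set (ℕ → I × O)) (σ : List (I × O) → I → O) : Set (ℕ → I × O) :=
  {w | ∃ k, (OutC σ ∩ cylE (wpref w k)).Nonempty ∧ OutC σ ∩ cylE (wpref w k) ∩ L = ∅}

/-- `EA⁻(σ) = EA(σ) \ Doomed(σ)`. -/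
def EAminus (L : Set (ℕ → I × O)) (σ : List (I × O) → I → O) : Set (ℕ → I × O) :=
  EA L σ \ Doomed L σ

/-- `A` is sufficient for the specification `L` (for some controller strategy). -/
def Sufficient (L A : Set (ℕ → I × O)) : Prop :=
  ∃ σ : List (I × O) → I → O, OutC σ ∩ A ⊆ L

/-- `A` is output-restrictive. -/
def OutputRestrictive (A : Set (ℕ → I × O)) : Prop :=
  ∃ (h : List (I × O)) (σ : List (I × O) → I → O),
    (A ∩ cylE h).Nonempty ∧ (OutC σ ∩ cylE h).Nonempty ∧ A ∩ OutC σ ∩ cylE h = ∅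

/-- The even history of length `n` produced jointly by controller `σ` and environment `τ`. -/
def playH (σ : List (I × O) → I → O) (τ : List (I × O) → I) : ℕ → List (I × O)
  | 0 => []
  | n+1 =>
      let g := playH σ τ n
      g ++ [(τ g, σ g (τ g))]

/-- The unique joint outcome `Out(σ, τ)`. -/
def play (σ : List (I × O) → I → O) (τ : List (I × O) → I) : ℕ → I × O := fun n =>
  let g := playH σ τ n
  (τ g, σ g (τ g))

/-- History construction when the controller follows `σ` against the fixed input word `u`. -/
def playIH (σ : List (I × O) → I → O) (u : ℕ → I) : ℕ → List (I × O)
  | 0 => []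
  | n+1 =>
      let g := playIH σ u n
      g ++ [(u n, σ g (u n))]

/-- The unique outcome `Out(σ, u)` of `σ` against the input word `u`. -/
def playI (σ : List (I × O) → I → O) (u : ℕ → I) : ℕ → I × O := fun n =>
  (u n, σ (playIH σ u n) (u n))

/-- Outcomes extending the history `h` and following `σ` afterwards, `Out_h(σ)`. -/
def OutFrom (σ : List (I × O) → I → O) (h : List (I × O) × Option I) :
    Set (ℕ → I × O) :=
  {w | wpref w h.1.length = h.1 ∧ (∀ i, h.2 = some i → (w h.1.length).1 = i) ∧
       ∀ n, h.1.length ≤ n → (w n).2 = σ (wpref w n) (w n).1}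

/-- Even histories extending the finite history `b`, following `σ` and `τ`. -/
def extH (σ : List (I × O) → I → O) (τ : List (I × O) → I)
    (b : List (I × O)) : ℕ → List (I × O)
  | 0 => b
  | n+1 =>
      let g := extH σ τ b n
      g ++ [(τ g, σ g (τ g))]

/-- The unique word extending `b` and following `σ` and `τ` afterwards. -/
def extPlay (σ : List (I × O) → I → O) (τ : List (I × O) → I)
    (b : List (I × O)) : ℕ → I × O := fun n =>
  if hn : n < b.length then b.get ⟨n, hn⟩
  else
    let g := extH σ τ b (n - b.length)
    (τ g, σ g (τ g))

/-- The even history obtained from the general history `h`, letting `σ` answer a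
pending input letter if there is one. -/
def histBase (σ : List (I × O) → I → O) (h : List (I × O) × Option I) :
    List (I × O) :=
  match h.2 with
  | none => h.1
  | some i => h.1 ++ [(i, σ h.1 i)]

/-- `Out_h(σ, τ)`: the unique word extending `h`, following `σ` and `τ` afterwards. -/
def playFrom (σ : List (I × O) → I → O) (τ : List (I × O) → I)
    (h : List (I × O) × Option I) : ℕ → I × O :=
  extPlay σ τ (histBase σ h)

/-- `σ` is strongly winning for `L`. -/
def StronglyWinning (L : Set (ℕ → I × O)) (σ : List (I × O) → I → O) : Prop :=
  ∀ h : List (I × O) × Option I,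
    (∃ σ' : List (I × O) → I → O, (OutC σ' ∩ cylH h).Nonempty ∧ OutC σ' ∩ cylH h ⊆ L) →
    OutC σ ∩ cylH h ⊆ L

/-- `σ` is subgame winning for `L`. -/
def SubgameWinning (L : Set (ℕ → I × O)) (σ : List (I × O) → I → O) : Prop :=
  ∀ h : List (I × O) × Option I,
    (∃ σ' : List (I × O) → I → O, OutFrom σ' h ⊆ L) → OutFrom σ h ⊆ L

lemma wpref_length (w : ℕ → I × O) (n : ℕ) : (wpref w n).length = n := by
  simp [wpref]

lemma wpref_succ' (w : ℕ → I × O) (n : ℕ) : wpref w (n+1) = wpref w n ++ [w n] := by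
  simp [wpref, List.range_succ]

lemma wpref_take' (w : ℕ → I × O) {m n : ℕ} (h : m ≤ n) :
    (wpref w n).take m = wpref w m := by
  simp [wpref, ← List.map_take, List.take_range, Nat.min_eq_left h]

lemma wpref_eq_iff' {w w' : ℕ → I × O} {n : ℕ} :
    wpref w n = wpref w' n ↔ ∀ k < n, w k = w' k := by
  simp [wpref, List.map_eq_map_iff]

lemma mem_cylE_iff {w : ℕ → I × O} {h : List (I × O)} :
    w ∈ cylE h ↔ wpref w h.length = h := Iff.rfl

/-- Prefix determinism of outcomes: two outcomes of `σ` agreeing on inputs below `n`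
have the same prefix of length `n`. -/
lemma outc_prefix_det {σ : List (I × O) → I → O} {w w' : ℕ → I × O}
    (hw : w ∈ OutC σ) (hw' : w' ∈ OutC σ) :
    ∀ n, (∀ k < n, (w k).1 = (w' k).1) → wpref w n = wpref w' n := by
  intro n
  induction n with
  | zero => intro _; rfl
  | succ n ih =>
      intro hin
      have hp : wpref w n = wpref w' n := ih fun k hk => hin k (Nat.lt_succ_of_lt hk)
      have h1 : (w n).1 = (w' n).1 := hin n (Nat.lt_succ_self n)
      have h2 : (w n).2 = (w' n).2 := by
        rw [hw n, hw' n, hp, h1]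
      rw [wpref_succ', wpref_succ', hp, Prod.ext h1 h2]

lemma wpref_playI (σ : List (I × O) → I → O) (u : ℕ → I) (n : ℕ) :
    wpref (playI σ u) n = playIH σ u n := by
  induction n with
  | zero => rfl
  | succ n ih => rw [wpref_succ', ih]; rfl

lemma playI_mem_OutC (σ : List (I × O) → I → O) (u : ℕ → I) :
    playI σ u ∈ OutC σ := by
  intro n
  show (σ (playIH σ u n) (u n)) = σ (wpref (playI σ u) n) (u n)
  rw [wpref_playI]

lemma mem_cylE_wpref {x w : ℕ → I × O} {k : ℕ} :
    x ∈ cylE (wpref w k) ↔ wpref x k = wpref w k := by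
  show wpref x (wpref w k).length = _ ↔ _
  rw [wpref_length]

/-- `EA⁻(σ)` is sufficient for `σ`, not output-restrictive, and
contains every non-output-restrictive assumption sufficient for `σ`. -/
theorem EAminus_sufficient_nonrestrictive_necessary
    (L : Set (ℕ → I × O)) (σ : List (I × O) → I → O) :
    OutC σ ∩ EAminus L σ ⊆ L ∧
    ¬ OutputRestrictive (EAminus L σ) ∧
    ∀ A : Set (ℕ → I × O), OutC σ ∩ A ⊆ L → ¬ OutputRestrictive A →
      A ⊆ EAminus L σ := by
  refine ⟨?_, ?_, ?_⟩
  · rintro w ⟨hwσ, hEA, -⟩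
    rcases hEA with hL | hne
    · exact hL
    · exact absurd hwσ hne
  · rintro ⟨h, σ', ⟨w0, ⟨hw0EA, hw0nd⟩, hw0c⟩, ⟨wc, hwcO, hwcc⟩, hemp⟩
    have hw0c' : wpref w0 h.length = h := hw0c
    have hwcc' : wpref wc h.length = h := hwcc
    have hndh : OutC σ ∩ cylE h = ∅ ∨ (OutC σ ∩ cylE h ∩ L).Nonempty := by
      by_contra hc
      push_neg at hc
      refine hw0nd ⟨h.length, ?_⟩
      rw [hw0c']
      exact ⟨hc.1, hc.2⟩
    rcases hndh with hempty | ⟨v, ⟨hvO, hvc⟩, hvL⟩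
    · -- no outcome of σ extends h: wc itself is in EA⁻
      have hmem : wc ∈ EAminus L σ ∩ OutC σ' ∩ cylE h := by
        refine ⟨⟨⟨Or.inr fun hin => ?_, ?_⟩, hwcO⟩, hwcc⟩
        · exact absurd (hempty ▸ (⟨hin, hwcc⟩ : wc ∈ OutC σ ∩ cylE h)) (Set.notMem_empty wc)
        · rintro ⟨k, hne, hLk⟩
          rcases le_or_gt k h.length with hk | hk
          · have hkk : wpref wc k = wpref w0 k := by
              rw [← wpref_take' wc hk, ← wpref_take' w0 hk, hwcc', hw0c']
            refine hw0nd ⟨k, ?_⟩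
            rw [← hkk]
            exact ⟨hne, hLk⟩
          · rcases hne with ⟨x, hxO, hxc⟩
            have hxc' : wpref x k = wpref wc k := mem_cylE_wpref.mp hxc
            have hxh : x ∈ cylE h := by
              show wpref x h.length = h
              rw [← wpref_take' x hk.le, hxc', wpref_take' wc hk.le, hwcc']
            exact absurd (hempty ▸ (⟨hxO, hxh⟩ : x ∈ OutC σ ∩ cylE h)) (Set.notMem_empty x)
      rw [hemp] at hmem
      exact hmem
    · -- there is v ∈ OutC σ ∩ cylE h ∩ L; play σ' against v's inputs
      have hvc' : wpref v h.length = h := hvc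
      set w : ℕ → I × O := playI σ' (inputProj v) with hw
      have hwO' : w ∈ OutC σ' := playI_mem_OutC σ' (inputProj v)
      have hfst : ∀ k, (w k).1 = (v k).1 := fun k => rfl
      have hvwc : ∀ k < h.length, v k = wc k := by
        refine wpref_eq_iff'.mp ?_
        rw [hvc', hwcc']
      have hwcyl : w ∈ cylE h := by
        show wpref w h.length = h
        have := outc_prefix_det hwO' hwcO h.length
          (fun k hk => by rw [hfst k, hvwc k hk])
        rw [this, hwcc']
      by_cases hall : ∀ n, w n = v n
      · have heq : w = v := funext hall
        have hmem : w ∈ EAminus L σ ∩ OutC σ' ∩ cylE h := by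
          refine ⟨⟨⟨Or.inl (heq ▸ hvL), ?_⟩, hwO'⟩, hwcyl⟩
          rintro ⟨k, hne, hLk⟩
          refine Set.eq_empty_iff_forall_notMem.mp hLk v ⟨⟨hvO, ?_⟩, hvL⟩
          exact mem_cylE_wpref.mpr (by rw [heq])
        rw [hemp] at hmem
        exact hmem
      · push_neg at hall
        have hm := Nat.find_spec hall
        set m := Nat.find hall with hmdef
        have hmin : ∀ k < m, w k = v k := fun k hk => by
          by_contra hc
          exact absurd (Nat.find_le hc : m ≤ k) (Nat.not_le.mpr hk)
        have hpm : wpref w m = wpref v m := wpref_eq_iff'.mpr hmin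
        have key : (w m).2 ≠ σ (wpref w m) (w m).1 := by
          intro hk
          apply hm
          refine Prod.ext (hfst m) ?_
          rw [hk, hvO m, hpm, hfst m]
        have hmem : w ∈ EAminus L σ ∩ OutC σ' ∩ cylE h := by
          refine ⟨⟨⟨Or.inr fun hin => key (hin m), ?_⟩, hwO'⟩, hwcyl⟩
          rintro ⟨k, hne, hLk⟩
          rcases le_or_gt k m with hk | hk
          · have hkk : wpref w k = wpref v k := by
              rw [← wpref_take' w hk, ← wpref_take' v hk, hpm]
            refine Set.eq_empty_iff_forall_notMem.mp hLk v ⟨⟨hvO, ?_⟩, hvL⟩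
            exact mem_cylE_wpref.mpr (by rw [hkk])
          · rcases hne with ⟨x, hxO, hxc⟩
            have hxc' : wpref x k = wpref w k := mem_cylE_wpref.mp hxc
            have hxw : ∀ j < k, x j = w j := wpref_eq_iff'.mp hxc'
            have hxm : wpref x m = wpref w m := wpref_eq_iff'.mpr
              (fun j hj => hxw j (hj.trans hk))
            apply key
            have := hxO m
            rw [hxm, hxw m hk] at this
            exact this
        rw [hemp] at hmem
        exact hmem
  · intro A hsuf hnr w hwA
    constructor
    · by_cases hσ : w ∈ OutC σ
      · exact Or.inl (hsuf ⟨hσ, hwA⟩)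
      · exact Or.inr hσ
    · rintro ⟨k, ⟨v, hvO, hvc⟩, hLk⟩
      apply hnr
      refine ⟨wpref w k, σ, ⟨w, hwA, mem_cylE_wpref.mpr rfl⟩, ⟨v, hvO, hvc⟩, ?_⟩
      refine Set.eq_empty_iff_forall_notMem.mpr ?_
      rintro x ⟨⟨hxA, hxO⟩, hxc⟩
      exact Set.eq_empty_iff_forall_notMem.mp hLk x ⟨⟨hxO, hxc⟩, hsuf ⟨hxO, hxA⟩⟩
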